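/- Let P and P₀ be skew-Hermitian endomorphisms of a finite-dimensional Hermitian space with the same spectrum, λ an eigenvalue, and δ > 0 less than the distance from λ to the rest of the spectrum. Then the spectral projectors Π and Π₀ onto the λ-eigenspaces satisfy |Π − Π₀| ≤ δ⁻¹ |P − P₀| (in operator norm). -/

import Mathlib

/-!
Multiplying by `I` turns the skew-Hermitian `P` into a self-adjoint operator, and expanding in an
orthonormal eigenbasis the gap condition gives `δ ‖w‖ ≤ ‖(P - λ) w‖` for every `w ⟂ ker (P - λ)`.
For `v ∈ ker (P₀ - λ)` and `w = v - Π v` one has `(P - λ) w = (P - P₀) v`, so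
`‖(1 - Π) Π₀‖ ≤ δ⁻¹ ‖P - P₀‖`, and symmetrically `‖(1 - Π₀) Π‖ ≤ δ⁻¹ ‖P - P₀‖`.
Finally `Π - Π₀ = Π (1 - Π₀) - (1 - Π) Π₀`, where the two terms have orthogonal ranges and the
first is the adjoint of `(1 - Π₀) Π`; Pythagoras on both sides gives the same bound for `Π - Π₀`.
-/

open scoped InnerProductSpace
open Module.End Complex

namespace LinearMap.IsSymmetric

variable {𝕜 E : Type*} [RCLike 𝕜] [NormedAddCommGroup E] [InnerProductSpace 𝕜 E]
  [FiniteDimensional 𝕜 E] {T : E →ₗ[𝕜] E}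

theorem mul_norm_le_norm_sub_smul_of_mem_orthogonal (hT : T.IsSymmetric) {μ : 𝕜} {δ : ℝ}
    (hδ : 0 ≤ δ) (hgap : ∀ ν, HasEigenvalue T ν → ν ≠ μ → δ ≤ ‖ν - μ‖) {w : E}
    (hw : w ∈ (eigenspace T μ)ᗮ) : δ * ‖w‖ ≤ ‖T w - μ • w‖ := by
  set b := hT.eigenvectorBasis rfl
  set ν := hT.eigenvalues rfl
  have hcoord (i) : ⟪b i, T w - μ • w⟫_𝕜 = (ν i - μ) * ⟪b i, w⟫_𝕜 := by
    rw [inner_sub_right, inner_smul_right, ← hT, hT.apply_eigenvectorBasis, inner_smul_left,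
      RCLike.conj_ofReal, sub_mul]
  have hterm (i) : δ * ‖⟪b i, w⟫_𝕜‖ ≤ ‖⟪b i, T w - μ • w⟫_𝕜‖ := by
    by_cases h : (ν i : 𝕜) = μ
    · have hb : b i ∈ eigenspace T μ :=
        mem_eigenspace_iff.mpr (h ▸ hT.apply_eigenvectorBasis rfl i)
      simp [Submodule.inner_right_of_mem_orthogonal hb hw]
    · rw [hcoord, norm_mul]
      gcongr
      exact hgap _ (hT.hasEigenvalue_eigenvalues rfl i) h
  have hsq : (δ * ‖w‖) ^ 2 ≤ ‖T w - μ • w‖ ^ 2 := by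
    rw [← b.sum_sq_norm_inner_right, mul_pow, ← b.sum_sq_norm_inner_right, Finset.mul_sum]
    gcongr with i
    rw [← mul_pow]
    exact pow_le_pow_left₀ (by positivity) (hterm i) 2
  exact (pow_le_pow_iff_left₀ (by positivity) (norm_nonneg _) two_ne_zero).mp hsq

end LinearMap.IsSymmetric

namespace Submodule

variable {𝕜 E : Type*} [RCLike 𝕜] [NormedAddCommGroup E] [InnerProductSpace 𝕜 E]
  {K L : Submodule 𝕜 E} [K.HasOrthogonalProjection] [L.HasOrthogonalProjection] {c : ℝ}

theorem norm_starProjection_le_of_mem_orthogonal (hc : 0 ≤ c)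
    (hKL : ∀ v ∈ K, ‖v - L.starProjection v‖ ≤ c * ‖v‖) {q : E} (hq : q ∈ Lᗮ) :
    ‖K.starProjection q‖ ≤ c * ‖q‖ := by
  set a := K.starProjection q
  -- `⟪a, q⟫ = ‖a‖²`, and `q ⟂ L` lets us replace `a` by its distance to `L` in that pairing
  have hinner : ⟪a - L.starProjection a, q⟫_𝕜 = (‖a‖ : 𝕜) ^ 2 := by
    have hqa : ⟪a, q - a⟫_𝕜 = 0 := inner_right_of_mem_orthogonal (K.starProjection_apply_mem q)
      (K.sub_starProjection_mem_orthogonal q)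
    rw [inner_sub_left, inner_right_of_mem_orthogonal (L.starProjection_apply_mem a) hq, sub_zero,
      ← inner_self_eq_norm_sq_to_K, ← sub_eq_zero, ← inner_sub_right, hqa]
  have hsq : ‖a‖ * ‖a‖ ≤ ‖a‖ * (c * ‖q‖) := calc
    ‖a‖ * ‖a‖ = ‖⟪a - L.starProjection a, q⟫_𝕜‖ := by
      rw [hinner, norm_pow, RCLike.norm_ofReal, abs_norm, sq]
    _ ≤ ‖a - L.starProjection a‖ * ‖q‖ := norm_inner_le_norm _ _
    _ ≤ c * ‖a‖ * ‖q‖ := by gcongr; exact hKL a (K.starProjection_apply_mem q)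
    _ = ‖a‖ * (c * ‖q‖) := by ring
  rcases (norm_nonneg a).eq_or_lt with ha | ha
  · rw [← ha]; positivity
  · exact le_of_mul_le_mul_left hsq ha

theorem norm_starProjection_sub_starProjection_le (hc : 0 ≤ c)
    (hLK : ∀ v ∈ L, ‖v - K.starProjection v‖ ≤ c * ‖v‖)
    (hKL : ∀ v ∈ K, ‖v - L.starProjection v‖ ≤ c * ‖v‖) :
    ‖K.starProjection - L.starProjection‖ ≤ c := by
  refine ContinuousLinearMap.opNorm_le_bound _ hc fun x => ?_
  set p := L.starProjection x
  set q := x - p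
  have hq : q ∈ Lᗮ := L.sub_starProjection_mem_orthogonal x
  have hx : ‖x‖ ^ 2 = ‖p‖ ^ 2 + ‖q‖ ^ 2 := by
    have := norm_add_sq_eq_norm_sq_add_norm_sq_of_inner_eq_zero p q
      (inner_right_of_mem_orthogonal (L.starProjection_apply_mem x) hq)
    rwa [add_sub_cancel, ← sq, ← sq, ← sq] at this
  have hdecomp : (K.starProjection - L.starProjection) x
      = K.starProjection q - (p - K.starProjection p) := by
    simp only [sub_apply, q, map_sub]
    abel
  have hperp : ⟪K.starProjection q, p - K.starProjection p⟫_𝕜 = 0 :=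
    inner_right_of_mem_orthogonal (K.starProjection_apply_mem q)
      (K.sub_starProjection_mem_orthogonal p)
  have hsq : ‖(K.starProjection - L.starProjection) x‖ ^ 2 ≤ (c * ‖x‖) ^ 2 := calc
    _ = ‖K.starProjection q‖ ^ 2 + ‖p - K.starProjection p‖ ^ 2 := by
      rw [hdecomp, @norm_sub_sq 𝕜, hperp, map_zero, mul_zero, sub_zero]
    _ ≤ (c * ‖q‖) ^ 2 + (c * ‖p‖) ^ 2 := by
      gcongr
      · exact norm_starProjection_le_of_mem_orthogonal hc hKL hq
      · exact hLK p (L.starProjection_apply_mem x)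
    _ = (c * ‖x‖) ^ 2 := by rw [mul_pow c ‖x‖, hx]; ring
  exact (pow_le_pow_iff_left₀ (norm_nonneg _) (by positivity) two_ne_zero).mp hsq

end Submodule

namespace ContinuousLinearMap

variable {E : Type*} [NormedAddCommGroup E] [InnerProductSpace ℂ E] {P : E →L[ℂ] E}

theorem isSymmetric_I_smul_of_adjoint_eq_neg [CompleteSpace E] (hP : adjoint P = -P) :
    ((I • P : E →L[ℂ] E) : E →ₗ[ℂ] E).IsSymmetric := by
  intro x y
  simp only [coe_coe, smul_apply, inner_smul_left, inner_smul_right, conj_I,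
    ← adjoint_inner_right P, hP, neg_apply, inner_neg_right]
  ring

theorem eigenspace_I_smul (lam : ℂ) :
    eigenspace ((I • P : E →L[ℂ] E) : E →ₗ[ℂ] E) (I * lam) = eigenspace (P : E →ₗ[ℂ] E) lam := by
  ext x
  simp only [mem_eigenspace_iff, coe_coe, smul_apply, mul_smul]
  exact smul_right_injective E I_ne_zero |>.eq_iff

theorem hasEigenvalue_of_hasEigenvalue_I_smul {ν : ℂ}
    (h : HasEigenvalue ((I • P : E →L[ℂ] E) : E →ₗ[ℂ] E) ν) :
    HasEigenvalue (P : E →ₗ[ℂ] E) (-I * ν) := by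
  have hν : ν = I * (-I * ν) := by linear_combination ν * I_sq
  rw [hν, hasEigenvalue_iff, eigenspace_I_smul] at h
  exact hasEigenvalue_iff.mpr h

theorem ker_sub_smul_one_eq_eigenspace (lam : ℂ) :
    LinearMap.ker ((P - lam • (1 : E →L[ℂ] E)) : E →ₗ[ℂ] E) =
      eigenspace (P : E →ₗ[ℂ] E) lam := by
  ext x
  simp [sub_eq_zero]

variable [FiniteDimensional ℂ E]

theorem mul_norm_le_norm_sub_smul_of_adjoint_eq_neg (hP : adjoint P = -P) {lam : ℂ} {δ : ℝ}
    (hδ : 0 ≤ δ) (hgap : ∀ μ ∈ spectrum ℂ P, μ ≠ lam → δ ≤ ‖μ - lam‖) {w : E}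
    (hw : w ∈ (eigenspace (P : E →ₗ[ℂ] E) lam)ᗮ) : δ * ‖w‖ ≤ ‖P w - lam • w‖ := by
  have hgap' (ν) (hν : HasEigenvalue ((I • P : E →L[ℂ] E) : E →ₗ[ℂ] E) ν) (hne : ν ≠ I * lam) :
      δ ≤ ‖ν - I * lam‖ := by
    have hmem : -I * ν ∈ spectrum ℂ P :=
      spectrum_eq (f := P) ▸ (hasEigenvalue_of_hasEigenvalue_I_smul hν).mem_spectrum
    have hne' : -I * ν ≠ lam := by
      rintro rfl
      exact hne (by linear_combination ν * I_sq)
    calc δ ≤ ‖-I * ν - lam‖ := hgap _ hmem hne'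
      _ = ‖ν - I * lam‖ := by
        rw [show -I * ν - lam = -I * (ν - I * lam) by linear_combination (-lam) * I_sq, norm_mul]
        simp
  calc δ * ‖w‖ ≤ ‖(I • P) w - (I * lam) • w‖ :=
        (isSymmetric_I_smul_of_adjoint_eq_neg hP).mul_norm_le_norm_sub_smul_of_mem_orthogonal hδ
          hgap' (by rwa [eigenspace_I_smul])
    _ = ‖P w - lam • w‖ := by rw [smul_apply, mul_smul, ← smul_sub, norm_smul, norm_I, one_mul]

theorem mul_norm_sub_starProjection_eigenspace_le (hP : adjoint P = -P) {lam : ℂ} {δ : ℝ}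
    (hδ : 0 ≤ δ) (hgap : ∀ μ ∈ spectrum ℂ P, μ ≠ lam → δ ≤ ‖μ - lam‖) (v : E) :
    δ * ‖v - (eigenspace (P : E →ₗ[ℂ] E) lam).starProjection v‖ ≤ ‖P v - lam • v‖ := by
  set K := eigenspace (P : E →ₗ[ℂ] E) lam
  have hPK : P (K.starProjection v) = lam • K.starProjection v :=
    mem_eigenspace_iff.mp (K.starProjection_apply_mem v)
  calc _ ≤ ‖P (v - K.starProjection v) - lam • (v - K.starProjection v)‖ :=
        mul_norm_le_norm_sub_smul_of_adjoint_eq_neg hP hδ hgap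
          (K.sub_starProjection_mem_orthogonal v)
    _ = ‖P v - lam • v‖ := by rw [map_sub, hPK, smul_sub, sub_sub_sub_cancel_right]

theorem norm_sub_starProjection_eigenspace_le_of_mem_eigenspace {P₀ : E →L[ℂ] E}
    (hP : adjoint P = -P) {lam : ℂ} {δ : ℝ} (hδ : 0 < δ)
    (hgap : ∀ μ ∈ spectrum ℂ P, μ ≠ lam → δ ≤ ‖μ - lam‖) {v : E}
    (hv : v ∈ eigenspace (P₀ : E →ₗ[ℂ] E) lam) :
    ‖v - (eigenspace (P : E →ₗ[ℂ] E) lam).starProjection v‖ ≤ δ⁻¹ * ‖P - P₀‖ * ‖v‖ := by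
  have hP₀v : P₀ v = lam • v := mem_eigenspace_iff.mp hv
  rw [mul_assoc, le_inv_mul_iff₀ hδ]
  calc _ ≤ ‖P v - lam • v‖ := mul_norm_sub_starProjection_eigenspace_le hP hδ.le hgap v
    _ = ‖(P - P₀) v‖ := by rw [sub_apply, hP₀v]
    _ ≤ ‖P - P₀‖ * ‖v‖ := le_opNorm _ _

end ContinuousLinearMap

theorem spectral_projector_estimate_general {n : ℕ}
    (P P₀ : EuclideanSpace ℂ (Fin n) →L[ℂ] EuclideanSpace ℂ (Fin n))
    (hP : ContinuousLinearMap.adjoint P = -P)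
    (hP₀ : ContinuousLinearMap.adjoint P₀ = -P₀)
    (hspec : spectrum ℂ P = spectrum ℂ P₀)
    (lam : ℂ)
    (δ : ℝ) (hδ : 0 < δ)
    (hgap : ∀ μ ∈ spectrum ℂ P, μ ≠ lam → δ < ‖μ - lam‖) :
    (fun (K K₀ : Submodule ℂ (EuclideanSpace ℂ (Fin n))) =>
      ‖(K.subtypeL.comp (Submodule.orthogonalProjectionOnto K)
          - K₀.subtypeL.comp (Submodule.orthogonalProjectionOnto K₀) :
          EuclideanSpace ℂ (Fin n) →L[ℂ] EuclideanSpace ℂ (Fin n))‖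
        ≤ δ⁻¹ * ‖P - P₀‖)
    (LinearMap.ker ((P - lam • (1 : EuclideanSpace ℂ (Fin n) →L[ℂ] EuclideanSpace ℂ (Fin n))) : EuclideanSpace ℂ (Fin n) →ₗ[ℂ] EuclideanSpace ℂ (Fin n)))
    (LinearMap.ker ((P₀ - lam • (1 : EuclideanSpace ℂ (Fin n) →L[ℂ] EuclideanSpace ℂ (Fin n))) : EuclideanSpace ℂ (Fin n) →ₗ[ℂ] EuclideanSpace ℂ (Fin n))) := by
  have hgapP : ∀ μ ∈ spectrum ℂ P, μ ≠ lam → δ ≤ ‖μ - lam‖ := fun μ hμ hne => (hgap μ hμ hne).le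
  have hgapP₀ : ∀ μ ∈ spectrum ℂ P₀, μ ≠ lam → δ ≤ ‖μ - lam‖ := hspec ▸ hgapP
  beta_reduce
  rw [ContinuousLinearMap.ker_sub_smul_one_eq_eigenspace,
    ContinuousLinearMap.ker_sub_smul_one_eq_eigenspace]
  refine Submodule.norm_starProjection_sub_starProjection_le (by positivity)
    (fun v hv => ?_) (fun v hv => ?_)
  · exact ContinuousLinearMap.norm_sub_starProjection_eigenspace_le_of_mem_eigenspace hP hδ hgapP hv
  · rw [norm_sub_rev P]
    exact
      ContinuousLinearMap.norm_sub_starProjection_eigenspace_le_of_mem_eigenspace hP₀ hδ hgapP₀ hv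

/-- Let `P` and `P₀` be skew-Hermitian endomorphisms of a finite-dimensional Hermitian
space with the same spectrum, `λ` an eigenvalue, and `δ > 0` less than the distance
from `λ` to the rest of the spectrum.  Then the orthogonal (spectral) projectors `Π`
and `Π₀` onto the `λ`-eigenspaces satisfy `‖Π − Π₀‖ ≤ δ⁻¹ ‖P − P₀‖`. -/
theorem spectral_projector_estimate {n : ℕ}
    (P P₀ : EuclideanSpace ℂ (Fin n) →L[ℂ] EuclideanSpace ℂ (Fin n))
    (hP : ContinuousLinearMap.adjoint P = -P)
    (hP₀ : ContinuousLinearMap.adjoint P₀ = -P₀)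
    (hspec : spectrum ℂ P = spectrum ℂ P₀)
    (lam : ℂ) (hlam : lam ∈ spectrum ℂ P)
    (δ : ℝ) (hδ : 0 < δ)
    (hgap : ∀ μ ∈ spectrum ℂ P, μ ≠ lam → δ < ‖μ - lam‖) :
    (fun (K K₀ : Submodule ℂ (EuclideanSpace ℂ (Fin n))) =>
      ‖(K.subtypeL.comp (Submodule.orthogonalProjectionOnto K)
          - K₀.subtypeL.comp (Submodule.orthogonalProjectionOnto K₀) :
          EuclideanSpace ℂ (Fin n) →L[ℂ] EuclideanSpace ℂ (Fin n))‖
        ≤ δ⁻¹ * ‖P - P₀‖)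
    (LinearMap.ker ((P - lam • (1 : EuclideanSpace ℂ (Fin n) →L[ℂ] EuclideanSpace ℂ (Fin n))) : EuclideanSpace ℂ (Fin n) →ₗ[ℂ] EuclideanSpace ℂ (Fin n)))
    (LinearMap.ker ((P₀ - lam • (1 : EuclideanSpace ℂ (Fin n) →L[ℂ] EuclideanSpace ℂ (Fin n))) : EuclideanSpace ℂ (Fin n) →ₗ[ℂ] EuclideanSpace ℂ (Fin n))) :=
  spectral_projector_estimate_general P P₀ hP hP₀ hspec lam δ hδ hgap
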